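/- arXiv:1512.01829 — 3 statements merged into one kernel-verified Lean document; each statement's English description precedes it below -/
import Mathlib

section
/- Let (G,M) be a MaxEDP instance with a fractional solution (f,x), (T,β) a tree decomposition of G of width less than r, and t a node of T. If t is good with respect to (f,x), then t is safe with respect to (f,x): there is a multicommodity flow g in G(t), respecting the edge capacities of G(t), that routes at least x(z)/(4r) units of flow (indeed, x(z) units) from every vertex z ∈ γ(t) to σ(t). -/
open SimpleGraph Finset
open scoped Classical

namespace Paper

noncomputable section

variable {V : Type} [Fintype V] [DecidableEq V] {τ : Type} [Fintype τ]

/-! ### Multicommodity flows as weighted path systems -/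

/-- Total amount of flow sent on paths from `u` to `v`. -/
def pairFlow {G : SimpleGraph V} (f : ∀ u v : V, G.Path u v → ℝ) (u v : V) : ℝ :=
  ∑ p : G.Path u v, f u v p

/-- Total amount of flow on paths using the edge `e`. -/
def edgeLoad {G : SimpleGraph V} (f : ∀ u v : V, G.Path u v → ℝ) (e : Sym2 V) : ℝ :=
  ∑ u, ∑ v, ∑ p : G.Path u v, if e ∈ (p : G.Walk u v).edges then f u v p else 0

/-- Total amount of flow on paths using the vertex `w`. -/
def vertLoad {G : SimpleGraph V} (f : ∀ u v : V, G.Path u v → ℝ) (w : V) : ℝ :=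
  ∑ u, ∑ v, ∑ p : G.Path u v, if w ∈ (p : G.Walk u v).support then f u v p else 0

/-- The marginal of `z`: the total amount of flow routed for `z`,
i.e. on paths having `z` as an endpoint. -/
def margOf {G : SimpleGraph V} (f : ∀ u v : V, G.Path u v → ℝ) (z : V) : ℝ :=
  (∑ v, pairFlow f z v) + ∑ u, pairFlow f u z

/-- The total value `|f|` of a multicommodity flow for the pairs `M`. -/
def valueOf {G : SimpleGraph V} (f : ∀ u v : V, G.Path u v → ℝ) (M : Finset (V × V)) : ℝ :=
  ∑ m ∈ M, pairFlow f m.1 m.2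

/-- The pairs `M` form a matching on the terminals: all the endpoints are distinct. -/
def PairsMatching (M : Finset (V × V)) : Prop :=
  (∀ m ∈ M, m.1 ≠ m.2) ∧
    ∀ m ∈ M, ∀ m' ∈ M, m ≠ m' →
      m.1 ≠ m'.1 ∧ m.1 ≠ m'.2 ∧ m.2 ≠ m'.1 ∧ m.2 ≠ m'.2

/-- `v` is a terminal of the collection of pairs `M`. -/
def Terminal (M : Finset (V × V)) (v : V) : Prop :=
  ∃ m ∈ M, m.1 = v ∨ m.2 = v

/-- A feasible fractional solution `(f, x)` to the multicommodity flow relaxation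
`EDP-LP` of MaxEDP (edge capacities): nonnegative flow between the pairs of `M` only,
routing `x_i ≤ 1` for each pair, satisfying the edge capacities.  The marginals `x`
are recovered as `pairFlow f` and `margOf f`. -/
structure EDPFlow (G : SimpleGraph V) (cap : Sym2 V → ℕ) (M : Finset (V × V)) where
  f : ∀ u v : V, G.Path u v → ℝ
  nonneg : ∀ u v p, 0 ≤ f u v p
  supp : ∀ u v, (u, v) ∉ M → ∀ p, f u v p = 0
  le_one : ∀ m ∈ M, pairFlow f m.1 m.2 ≤ 1
  feas : ∀ e : Sym2 V, edgeLoad f e ≤ (cap e : ℝ)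

def EDPFlow.value {G : SimpleGraph V} {cap : Sym2 V → ℕ} {M : Finset (V × V)}
    (F : EDPFlow G cap M) : ℝ := valueOf F.f M

def EDPFlow.marg {G : SimpleGraph V} {cap : Sym2 V → ℕ} {M : Finset (V × V)}
    (F : EDPFlow G cap M) (z : V) : ℝ := margOf F.f z

/-- A feasible fractional solution to the multicommodity flow relaxation of
MaxNDP (node capacities). -/
structure NDPFlow (G : SimpleGraph V) (cap : V → ℕ) (M : Finset (V × V)) where
  f : ∀ u v : V, G.Path u v → ℝ
  nonneg : ∀ u v p, 0 ≤ f u v p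
  supp : ∀ u v, (u, v) ∉ M → ∀ p, f u v p = 0
  le_one : ∀ m ∈ M, pairFlow f m.1 m.2 ≤ 1
  feas : ∀ w : V, vertLoad f w ≤ (cap w : ℝ)

def NDPFlow.value {G : SimpleGraph V} {cap : V → ℕ} {M : Finset (V × V)}
    (F : NDPFlow G cap M) : ℝ := valueOf F.f M

def NDPFlow.marg {G : SimpleGraph V} {cap : V → ℕ} {M : Finset (V × V)}
    (F : NDPFlow G cap M) (z : V) : ℝ := margOf F.f z

/-- There is a feasible integral routing (with congestion `con`) of at least `q`
of the pairs of `M`, subject to edge capacities: a subset `R ⊆ M` of size at least `q`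
together with a choice of a path for each pair of `R` such that every edge `e`
is on at most `con * cap e` of the chosen paths. -/
def HasEDPRouting (G : SimpleGraph V) (cap : Sym2 V → ℕ) (M : Finset (V × V))
    (con : ℕ) (q : ℝ) : Prop :=
  ∃ (R : Finset (V × V)) (route : ∀ m ∈ R, G.Path m.1 m.2),
    R ⊆ M ∧ q ≤ (R.card : ℝ) ∧
      ∀ e : Sym2 V,
        (R.attach.filter fun m => e ∈ (route m.1 m.2).val.edges).card ≤ con * cap e

/-- There is a feasible integral routing (with congestion `con`) of at least `q`
of the pairs of `M`, subject to node capacities. -/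
def HasNDPRouting (G : SimpleGraph V) (cap : V → ℕ) (M : Finset (V × V))
    (con : ℕ) (q : ℝ) : Prop :=
  ∃ (R : Finset (V × V)) (route : ∀ m ∈ R, G.Path m.1 m.2),
    R ⊆ M ∧ q ≤ (R.card : ℝ) ∧
      ∀ w : V,
        (R.attach.filter fun m => w ∈ (route m.1 m.2).val.support).card ≤ con * cap w

/-! ### Induced subgraphs on vertex subsets -/

/-- The subgraph of `G` induced on `U` (as a graph on the same vertex set, with all
vertices outside `U` isolated). -/
def restrictG (G : SimpleGraph V) (U : Set V) : SimpleGraph V where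
  Adj u v := u ∈ U ∧ v ∈ U ∧ G.Adj u v
  symm := ⟨fun u v h => ⟨h.2.1, h.1, h.2.2.symm⟩⟩
  loopless := ⟨fun v h => G.loopless.irrefl v h.2.2⟩

lemma restrictG_le (G : SimpleGraph V) (U : Set V) : restrictG G U ≤ G :=
  fun _ _ h => h.2.2

/-- Push a path along a subgraph inclusion. -/
def pathMapLe {G G' : SimpleGraph V} (h : G ≤ G') {u v : V} (p : G.Path u v) :
    G'.Path u v :=
  ⟨(p : G.Walk u v).mapLe h, (SimpleGraph.Walk.mapLe_isPath h).mpr p.prop⟩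

/-- The vertex set `s` is (nonempty and) connected in `G`. -/
def ConnOn (G : SimpleGraph V) (s : Finset V) : Prop :=
  s.Nonempty ∧ ∀ u ∈ s, ∀ v ∈ s, (restrictG G ↑s).Reachable u v

/-! ### Rooted tree decompositions -/

/-- The parent adhesion `σ(t) = β(t) ∩ β(parent t)` (empty at the root). -/
def sigmaOf (parent : τ → τ) (root : τ) (bag : τ → Finset V) (t : τ) : Finset V :=
  if t = root then ∅ else bag t ∩ bag (parent t)

/-- `γ(t)`: the union of the bags at the descendants of `t`. -/
def gammaOf (parent : τ → τ) (bag : τ → Finset V) (t : τ) : Finset V :=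
  Finset.univ.filter fun v => ∃ s, (∃ n, parent^[n] s = t) ∧ v ∈ bag s

/-- A rooted tree decomposition of `G`, encoded by the parent map of the rooted
tree on the node set `τ`.  The last two axioms state that for every vertex `v` the
set of nodes whose bag contains `v` is connected in the tree (it is closed under
taking intermediate ancestors, and any two such nodes have a common ancestor
whose bag still contains `v`). -/
structure TreeDecomp (τ : Type) [Fintype τ] {V : Type} [Fintype V] [DecidableEq V]
    (G : SimpleGraph V) where
  root : τ
  parent : τ → τ
  parent_root : parent root = root
  reach_root : ∀ t : τ, ∃ n : ℕ, parent^[n] t = root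
  bag : τ → Finset V
  edge_in_bag : ∀ u v : V, G.Adj u v → ∃ t, u ∈ bag t ∧ v ∈ bag t
  vert_in_bag : ∀ v : V, ∃ t, v ∈ bag t
  interval : ∀ (v : V) (t : τ) (m n : ℕ), m ≤ n → v ∈ bag t → v ∈ bag (parent^[n] t) →
    v ∈ bag (parent^[m] t)
  meet : ∀ (v : V) (t s : τ), v ∈ bag t → v ∈ bag s →
    ∃ m n : ℕ, parent^[m] t = parent^[n] s ∧ v ∈ bag (parent^[m] t)

variable {G : SimpleGraph V}

/-- The tree of the decomposition is a path rooted at one of its endpoints: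
every node has at most one child. -/
def TreeDecomp.IsPathDecomp (D : TreeDecomp τ G) : Prop :=
  ∀ t s : τ, D.parent t = D.parent s → t ≠ D.parent t → s ≠ D.parent s → t = s

def TreeDecomp.sigma (D : TreeDecomp τ G) (t : τ) : Finset V :=
  sigmaOf D.parent D.root D.bag t

def TreeDecomp.gamma (D : TreeDecomp τ G) (t : τ) : Finset V :=
  gammaOf D.parent D.bag t

def TreeDecomp.alpha (D : TreeDecomp τ G) (t : τ) : Finset V :=
  D.gamma t \ D.sigma t

/-- The graph `G(t) = G[γ(t)] − E(G[σ(t)])`. -/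
def TreeDecomp.Gt (D : TreeDecomp τ G) (t : τ) : SimpleGraph V where
  Adj u v := G.Adj u v ∧ u ∈ D.gamma t ∧ v ∈ D.gamma t ∧ ¬(u ∈ D.sigma t ∧ v ∈ D.sigma t)
  symm := ⟨fun u v h => ⟨h.1.symm, h.2.2.1, h.2.1, fun hc => h.2.2.2 ⟨hc.2, hc.1⟩⟩⟩
  loopless := ⟨fun v h => G.loopless.irrefl v h.1⟩

/-! ### Flows to a set of vertices -/

/-- A feasible (edge-capacitated) flow in `H` whose flow paths all end in `S`. -/
structure EFlowToSet (H : SimpleGraph V) (cap : Sym2 V → ℕ) (S : Finset V) where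
  g : ∀ u v : V, H.Path u v → ℝ
  nonneg : ∀ u v p, 0 ≤ g u v p
  ends : ∀ u v p, g u v p ≠ 0 → v ∈ S
  feas : ∀ e : Sym2 V, edgeLoad g e ≤ (cap e : ℝ)

/-- The amount of flow routed from `z` (to the target set). -/
def EFlowToSet.fromAmt {H : SimpleGraph V} {cap : Sym2 V → ℕ} {S : Finset V}
    (F : EFlowToSet H cap S) (z : V) : ℝ :=
  ∑ v, pairFlow F.g z v

/-- A feasible (node-capacitated) flow in `H` whose flow paths all end in `S`. -/
structure NFlowToSet (H : SimpleGraph V) (cap : V → ℕ) (S : Finset V) where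
  g : ∀ u v : V, H.Path u v → ℝ
  nonneg : ∀ u v p, 0 ≤ g u v p
  ends : ∀ u v p, g u v p ≠ 0 → v ∈ S
  feas : ∀ w : V, vertLoad g w ≤ (cap w : ℝ)

def NFlowToSet.fromAmt {H : SimpleGraph V} {cap : V → ℕ} {S : Finset V}
    (F : NFlowToSet H cap S) (z : V) : ℝ :=
  ∑ v, pairFlow F.g z v

/-! ### Safe and good nodes -/

/-- A node `t` is safe w.r.t. an (edge-capacitated) fractional solution `F` if some
feasible flow in `G(t)` routes at least `x(z)/(4r)` from every `z ∈ γ(t)` to `σ(t)`. -/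
def ESafe {M : Finset (V × V)} (cap : Sym2 V → ℕ) (D : TreeDecomp τ G) (r : ℕ)
    (F : EDPFlow G cap M) (t : τ) : Prop :=
  ∃ gf : EFlowToSet (D.Gt t) cap (D.sigma t),
    ∀ z ∈ D.gamma t, F.marg z / (4 * (r : ℝ)) ≤ gf.fromAmt z

/-- A node `t` is safe w.r.t. a node-capacitated fractional solution `F`. -/
def NSafe {M : Finset (V × V)} (cap : V → ℕ) (D : TreeDecomp τ G) (r : ℕ)
    (F : NDPFlow G cap M) (t : τ) : Prop :=
  ∃ gf : NFlowToSet (D.Gt t) cap (D.sigma t),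
    ∀ z ∈ D.gamma t, F.marg z / (4 * (r : ℝ)) ≤ gf.fromAmt z

/-- `t` is good w.r.t. a flow `f` (for the decomposition data `parent`, `root`, `bag`):
every flow path in the support of `f` with an endpoint in `γ(t)` intersects `σ(t)`. -/
def GoodWrt {G : SimpleGraph V} (f : ∀ u v : V, G.Path u v → ℝ)
    (parent : τ → τ) (root : τ) (bag : τ → Finset V) (t : τ) : Prop :=
  ∀ (u v : V) (p : G.Path u v), f u v p ≠ 0 →
    (u ∈ gammaOf parent bag t ∨ v ∈ gammaOf parent bag t) →
    ∃ w ∈ sigmaOf parent root bag t, w ∈ (p : G.Walk u v).support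

def EGood {M : Finset (V × V)} {cap : Sym2 V → ℕ} (D : TreeDecomp τ G)
    (F : EDPFlow G cap M) (t : τ) : Prop :=
  GoodWrt F.f D.parent D.root D.bag t

def NGood {M : Finset (V × V)} {cap : V → ℕ} (D : TreeDecomp τ G)
    (F : NDPFlow G cap M) (t : τ) : Prop :=
  GoodWrt F.f D.parent D.root D.bag t

/-- The total capacity of the edge cut `δ(U)`. -/
def cutCap (G : SimpleGraph V) (cap : Sym2 V → ℕ) (U : Finset V) : ℝ :=
  ∑ u ∈ U, ∑ v ∈ Uᶜ, if G.Adj u v then (cap s(u, v) : ℝ) else 0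

/-! ### Multicommodity flows with demands, well-linkedness -/

/-- A feasible edge-capacitated multicommodity flow routing at least `dem u v`
between every pair `(u, v)`. -/
structure EMCFlow (H : SimpleGraph V) (cap : Sym2 V → ℕ) (dem : V → V → ℝ) where
  g : ∀ u v : V, H.Path u v → ℝ
  nonneg : ∀ u v p, 0 ≤ g u v p
  routes : ∀ u v : V, dem u v ≤ pairFlow g u v
  feas : ∀ e : Sym2 V, edgeLoad g e ≤ (cap e : ℝ)

/-- A feasible node-capacitated multicommodity flow routing at least `dem u v`
between every pair `(u, v)`. -/
structure NMCFlow (H : SimpleGraph V) (cap : V → ℕ) (dem : V → V → ℝ) where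
  g : ∀ u v : V, H.Path u v → ℝ
  nonneg : ∀ u v p, 0 ≤ g u v p
  routes : ∀ u v : V, dem u v ≤ pairFlow g u v
  feas : ∀ w : V, vertLoad g w ≤ (cap w : ℝ)

/-- `X` is `π`-flow-well-linked in the edge-capacitated graph `H`. -/
def FlowWellLinked (H : SimpleGraph V) (cap : Sym2 V → ℕ) (X : Finset V)
    (π : V → ℝ) : Prop :=
  Nonempty (EMCFlow H cap fun u v =>
    if u ∈ X ∧ v ∈ X then π u * π v / (∑ w ∈ X, π w) else 0)

/-- The pairs of `M` with both endpoints in `s`. -/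
def inducedPairs (M : Finset (V × V)) (s : Finset V) : Finset (V × V) :=
  M.filter fun m => m.1 ∈ s ∧ m.2 ∈ s

/-- The set of endpoints of the pairs of `M`. -/
def endpointsOf (M : Finset (V × V)) : Finset V :=
  M.image Prod.fst ∪ M.image Prod.snd

/-! ### Minors, graph classes, torsos -/

/-- `H` is a minor of `G`, via disjoint connected branch sets. -/
def IsMinorOf {W : Type} (H : SimpleGraph W) (G : SimpleGraph V) : Prop :=
  ∃ φ : W → Finset V,
    (∀ w, ConnOn G (φ w)) ∧
    (∀ w w', w ≠ w' → Disjoint (φ w) (φ w')) ∧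
    (∀ w w', H.Adj w w' → ∃ a ∈ φ w, ∃ b ∈ φ w', G.Adj a b)

/-- A class of (finite) graphs, given by its members on the canonical vertex sets. -/
def MinorClosed (𝒢 : ∀ n : ℕ, SimpleGraph (Fin n) → Prop) : Prop :=
  ∀ {n m : ℕ} (G : SimpleGraph (Fin n)) (H : SimpleGraph (Fin m)),
    𝒢 n G → IsMinorOf H G → 𝒢 m H

/-- A finite graph belongs to the class `𝒢` (up to isomorphism). -/
def InClass (𝒢 : ∀ n : ℕ, SimpleGraph (Fin n) → Prop) {W : Type}
    (H : SimpleGraph W) : Prop :=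
  ∃ (n : ℕ) (H' : SimpleGraph (Fin n)), 𝒢 n H' ∧ Nonempty (H ≃g H')

/-- The torso at `t`: the subgraph induced on `β(t)`, with all adhesions of tree edges
incident to `t` turned into cliques (as a graph on `V`; restrict to the bag to get
the usual torso). -/
def TreeDecomp.torso (D : TreeDecomp τ G) (t : τ) : SimpleGraph V :=
  SimpleGraph.fromRel fun u v =>
    u ∈ D.bag t ∧ v ∈ D.bag t ∧
      (G.Adj u v ∨ (u ∈ D.sigma t ∧ v ∈ D.sigma t) ∨
        ∃ s : τ, s ≠ D.root ∧ D.parent s = t ∧ u ∈ D.sigma s ∧ v ∈ D.sigma s)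

/-! ### Treedepth -/

/-- The connected component of `v` in `G` restricted to `s`. -/
def compOf (G : SimpleGraph V) (s : Finset V) (v : V) : Finset V :=
  s.filter fun u => (restrictG G ↑s).Reachable v u

/-- Treedepth of `G[s]`, computed with fuel (the recursion terminates before the
fuel runs out, since both deleting a vertex and passing to a connected component of
a disconnected graph strictly decrease the number of vertices). -/
def tdAux (G : SimpleGraph V) : ℕ → Finset V → ℕ
  | 0, _ => 0
  | fuel + 1, s =>
    if hs : s.Nonempty then
      if ConnOn G s then
        1 + s.inf' hs fun v => tdAux G fuel (s.erase v)
      else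
        s.sup fun v => tdAux G fuel (compOf G s v)
    else 0

/-- The treedepth of the subgraph of `G` induced on `s`:  `td(∅) = 0`;
`td(G) = 1 + min_v td(G − v)` for a connected nonempty `G`; and `td(G)` is the maximum
of the treedepths of the connected components for a disconnected `G`. -/
def treedepth (G : SimpleGraph V) (s : Finset V) : ℕ :=
  tdAux G s.card s

end

/-! Cut every flow path of `f` with an endpoint in `γ(t)` down to its end segments: by goodness
the path meets `σ(t)`, and since `σ(t)` separates `γ(t)` from the rest of `G`, the segment from
an endpoint in `γ(t)` to the nearest vertex of `σ(t)` is a path of `G(t)`. The two end segments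
are edge-disjoint subpaths of the original path, so letting each carry the flow of that path
does not increase the load of any edge, and every `z ∈ γ(t)` still sends its full marginal
`x(z)`, now into `σ(t)`. -/

noncomputable section

section PushAlong

variable {X Y : Type*} [Fintype X]

def pushAlong (f : X → ℝ) (π : X → Option Y) (y : Y) : ℝ :=
  ∑ x, if π x = some y then f x else 0

lemma pushAlong_nonneg {f : X → ℝ} (hf : ∀ x, 0 ≤ f x) (π : X → Option Y) (y : Y) :
    0 ≤ pushAlong f π y :=
  Finset.sum_nonneg fun x _ => by split_ifs <;> simp [hf x]

lemma pushAlong_eq_zero {f : X → ℝ} {π : X → Option Y} {y : Y}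
    (hy : ∀ x, π x ≠ some y) : pushAlong f π y = 0 :=
  Finset.sum_eq_zero fun x _ => if_neg (hy x)

lemma sum_mul_pushAlong [Fintype Y] (f : X → ℝ) (π : X → Option Y) (h : Y → ℝ) :
    ∑ y, h y * pushAlong f π y = ∑ x, (π x).elim 0 h * f x := by
  simp only [pushAlong, Finset.mul_sum]
  rw [Finset.sum_comm]
  refine Finset.sum_congr rfl fun x _ => ?_
  cases π x <;> simp

end PushAlong

section PathSums

variable {V : Type} [Fintype V] [DecidableEq V] {H : SimpleGraph V}

abbrev PathSig (H : SimpleGraph V) := Σ a b : V, H.Path a b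

def PathSig.edges (y : PathSig H) : List (Sym2 V) := (y.2.2 : H.Walk y.1 y.2.1).edges

def uncurryFlow (f : ∀ u v : V, H.Path u v → ℝ) (y : PathSig H) : ℝ := f y.1 y.2.1 y.2.2

lemma edgeLoad_eq_sum (f : ∀ u v : V, H.Path u v → ℝ) (e : Sym2 V) :
    edgeLoad f e = ∑ y : PathSig H, (if e ∈ y.edges then 1 else 0) * uncurryFlow f y := by
  simp only [edgeLoad, Fintype.sum_sigma]
  exact Finset.sum_congr rfl fun _ _ => Finset.sum_congr rfl fun _ _ =>
    Finset.sum_congr rfl fun _ _ => (boole_mul _ _).symm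

lemma sum_pairFlow_eq_sum (f : ∀ u v : V, H.Path u v → ℝ) (z : V) :
    ∑ w, pairFlow f z w = ∑ y : PathSig H, (if y.1 = z then 1 else 0) * uncurryFlow f y := by
  simp [pairFlow, Fintype.sum_sigma, uncurryFlow]

lemma margOf_eq_sum (f : ∀ u v : V, H.Path u v → ℝ) (z : V) :
    margOf f z = ∑ y : PathSig H,
      ((if y.1 = z then 1 else 0) + (if y.2.1 = z then 1 else 0)) * uncurryFlow f y := by
  simp [margOf, pairFlow, Fintype.sum_sigma, uncurryFlow, add_mul, Finset.sum_add_distrib]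

lemma margOf_nonneg {f : ∀ u v : V, H.Path u v → ℝ} (hf : ∀ u v p, 0 ≤ f u v p) (z : V) :
    0 ≤ margOf f z :=
  add_nonneg (Finset.sum_nonneg fun _ _ => Finset.sum_nonneg fun _ _ => hf _ _ _)
    (Finset.sum_nonneg fun _ _ => Finset.sum_nonneg fun _ _ => hf _ _ _)

end PathSums

section SplitFlow

variable {V : Type} [Fintype V] [DecidableEq V] {G H : SimpleGraph V}

/-- `o.1` and `o.2`, when present, are edge-disjoint pieces of `x` lying in `H`, running from
the first and from the last vertex of `x` respectively into `S`. -/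
structure IsEndPieces (S : Finset V) (x : PathSig G)
    (o : Option (PathSig H) × Option (PathSig H)) : Prop where
  fst : ∀ y ∈ o.1, y.1 = x.1 ∧ y.2.1 ∈ S ∧ ∀ e ∈ y.edges, e ∈ x.edges
  snd : ∀ y ∈ o.2, y.1 = x.2.1 ∧ y.2.1 ∈ S ∧ ∀ e ∈ y.edges, e ∈ x.edges
  disjoint : ∀ y₁ ∈ o.1, ∀ y₂ ∈ o.2, ∀ e ∈ y₁.edges, e ∉ y₂.edges

def splitFlow (f : ∀ u v : V, G.Path u v → ℝ)
    (π : PathSig G → Option (PathSig H) × Option (PathSig H)) (a b : V) (q : H.Path a b) :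
    ℝ :=
  pushAlong (uncurryFlow f) (fun x => (π x).1) ⟨a, b, q⟩ +
    pushAlong (uncurryFlow f) (fun x => (π x).2) ⟨a, b, q⟩

variable {S : Finset V} {f : ∀ u v : V, G.Path u v → ℝ}
  {π : PathSig G → Option (PathSig H) × Option (PathSig H)}

lemma sum_mul_splitFlow (h : PathSig H → ℝ) :
    ∑ y, h y * uncurryFlow (splitFlow f π) y =
      ∑ x, ((π x).1.elim 0 h + (π x).2.elim 0 h) * uncurryFlow f x := by
  simp only [uncurryFlow, splitFlow, mul_add, Finset.sum_add_distrib, add_mul]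
  exact congrArg₂ (· + ·) (sum_mul_pushAlong _ _ h) (sum_mul_pushAlong _ _ h)

lemma splitFlow_nonneg (hf : ∀ u v p, 0 ≤ f u v p) (a b : V) (q : H.Path a b) :
    0 ≤ splitFlow f π a b q :=
  add_nonneg (pushAlong_nonneg (fun _ => hf _ _ _) _ _) (pushAlong_nonneg (fun _ => hf _ _ _) _ _)

lemma mem_of_splitFlow_ne_zero (hπ : ∀ x, IsEndPieces S x (π x)) {a b : V} {q : H.Path a b}
    (hq : splitFlow f π a b q ≠ 0) : b ∈ S := by
  by_contra hb
  refine hq ?_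
  rw [splitFlow, pushAlong_eq_zero, pushAlong_eq_zero, add_zero]
  · exact fun x hx => hb ((hπ x).snd _ hx).2.1
  · exact fun x hx => hb ((hπ x).fst _ hx).2.1

omit [Fintype V] in
lemma IsEndPieces.elim_edge_add_le {x : PathSig G} {o : Option (PathSig H) × Option (PathSig H)}
    (ho : IsEndPieces S x o) (e : Sym2 V) :
    o.1.elim 0 (fun y => if e ∈ y.edges then 1 else 0) +
        o.2.elim 0 (fun y => if e ∈ y.edges then 1 else 0) ≤
      if e ∈ x.edges then (1 : ℝ) else 0 := by
  obtain ⟨hfst, hsnd, hdisj⟩ := ho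
  rcases o with ⟨_ | y₁, _ | y₂⟩ <;> simp only [Option.elim] <;> split_ifs <;> grind

lemma edgeLoad_splitFlow_le (hf : ∀ u v p, 0 ≤ f u v p) (hπ : ∀ x, IsEndPieces S x (π x))
    (e : Sym2 V) : edgeLoad (splitFlow f π) e ≤ edgeLoad f e := by
  rw [edgeLoad_eq_sum, edgeLoad_eq_sum, sum_mul_splitFlow]
  gcongr with x
  exacts [hf _ _ _, (hπ x).elim_edge_add_le e]

omit [Fintype V] in
lemma IsEndPieces.elim_fst_source {x : PathSig G} {o : Option (PathSig H) × Option (PathSig H)}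
    (ho : IsEndPieces S x o) {z : V} (hz : x.1 = z → o.1.isSome) :
    o.1.elim 0 (fun y => if y.1 = z then 1 else 0) = if x.1 = z then (1 : ℝ) else 0 := by
  rcases h : o.1 with _ | y
  · simp_all
  · simp [(ho.fst y h).1]

omit [Fintype V] in
lemma IsEndPieces.elim_snd_source {x : PathSig G} {o : Option (PathSig H) × Option (PathSig H)}
    (ho : IsEndPieces S x o) {z : V} (hz : x.2.1 = z → o.2.isSome) :
    o.2.elim 0 (fun y => if y.1 = z then 1 else 0) = if x.2.1 = z then (1 : ℝ) else 0 := by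
  rcases h : o.2 with _ | y
  · simp_all
  · simp [(ho.snd y h).1]

lemma sum_pairFlow_splitFlow (hπ : ∀ x, IsEndPieces S x (π x)) {z : V}
    (hsome : ∀ x, uncurryFlow f x ≠ 0 →
      (x.1 = z → (π x).1.isSome) ∧ (x.2.1 = z → (π x).2.isSome)) :
    ∑ w, pairFlow (splitFlow f π) z w = margOf f z := by
  rw [sum_pairFlow_eq_sum, sum_mul_splitFlow, margOf_eq_sum]
  refine Finset.sum_congr rfl fun x _ => ?_
  by_cases hx : uncurryFlow f x = 0
  · simp [hx]
  · rw [(hπ x).elim_fst_source (hsome x hx).1, (hπ x).elim_snd_source (hsome x hx).2]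

end SplitFlow

section EndSegments

variable {V : Type} {G H : SimpleGraph V} {A S : Finset V}

/-- `S` separates `A` from the rest of `G`, and `H` keeps all edges of `G` at `A \ S`. -/
def GuardedBy (G H : SimpleGraph V) (A S : Finset V) : Prop :=
  ∀ x y, G.Adj x y → x ∈ A → x ∉ S → H.Adj x y ∧ y ∈ A

theorem exists_append_guarded_prefix (hAS : GuardedBy G H A S) {u v : V} (p : G.Walk u v)
    (hS : ∃ w ∈ S, w ∈ p.support) :
    ∃ w ∈ S, ∃ (a : G.Walk u w) (rest : G.Walk w v),
      a.append rest = p ∧ (u ∈ A → ∀ e ∈ a.edges, e ∈ H.edgeSet) := by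
  induction p with
  | nil =>
    obtain ⟨w, hw, hwu⟩ := hS
    rw [Walk.support_nil, List.mem_singleton] at hwu
    subst hwu
    exact ⟨w, hw, .nil, .nil, rfl, by simp⟩
  | @cons u b v hub p ih =>
    by_cases hu : u ∈ S
    · exact ⟨u, hu, .nil, .cons hub p, rfl, by simp⟩
    have hS' : ∃ w ∈ S, w ∈ p.support := by
      obtain ⟨w, hw, hwp⟩ := hS
      rw [Walk.support_cons, List.mem_cons] at hwp
      rcases hwp with rfl | hwp
      exacts [absurd hw hu, ⟨w, hw, hwp⟩]
    obtain ⟨w, hw, a, rest, rfl, ha⟩ := ih hS'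
    refine ⟨w, hw, .cons hub a, rest, rfl, fun huA e he => ?_⟩
    obtain ⟨hHub, hbA⟩ := hAS u b hub huA hu
    rw [Walk.edges_cons, List.mem_cons] at he
    rcases he with rfl | he
    exacts [hHub, ha hbA e he]

theorem exists_guarded_end_segments (hAS : GuardedBy G H A S) {u v : V} (p : G.Walk u v)
    (hS : ∃ w ∈ S, w ∈ p.support) :
    ∃ w₁ ∈ S, ∃ w₂ ∈ S,
      ∃ (a : G.Walk u w₁) (mid : G.Walk w₁ w₂) (b : G.Walk v w₂),
      a.append (mid.append b.reverse) = p ∧ (u ∈ A → ∀ e ∈ a.edges, e ∈ H.edgeSet) ∧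
        (v ∈ A → ∀ e ∈ b.edges, e ∈ H.edgeSet) := by
  obtain ⟨w₁, hw₁, a, rest, rfl, ha⟩ := exists_append_guarded_prefix hAS p hS
  obtain ⟨w₂, hw₂, b, mid, hbmid, hb⟩ :=
    exists_append_guarded_prefix hAS rest.reverse ⟨w₁, hw₁, rest.reverse.end_mem_support⟩
  refine ⟨w₁, hw₁, w₂, hw₂, a, mid.reverse, b, ?_, ha, hb⟩
  rw [← Walk.reverse_append, hbmid, Walk.reverse_reverse]

def endPiece {u w : V} (c : Prop) [Decidable c] (a : G.Walk u w) (hpath : a.IsPath)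
    (hedges : c → ∀ e ∈ a.edges, e ∈ H.edgeSet) : Option (PathSig H) :=
  if hc : c then some ⟨u, w, a.transfer H (hedges hc), hpath.transfer (hedges hc)⟩ else none

lemma mem_endPiece {u w : V} {c : Prop} [Decidable c] {a : G.Walk u w} {hpath : a.IsPath}
    {hedges : c → ∀ e ∈ a.edges, e ∈ H.edgeSet} {y : PathSig H}
    (hy : y ∈ endPiece c a hpath hedges) :
    y.1 = u ∧ y.2.1 = w ∧ y.edges = a.edges := by
  unfold endPiece at hy
  split_ifs at hy
  · obtain rfl := Option.some_inj.mp hy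
    exact ⟨rfl, rfl, Walk.edges_transfer _ _⟩
  · exact absurd hy (Option.not_mem_none y)

lemma isSome_endPiece {u w : V} {c : Prop} [Decidable c] {a : G.Walk u w} {hpath : a.IsPath}
    {hedges : c → ∀ e ∈ a.edges, e ∈ H.edgeSet} (hc : c) :
    (endPiece c a hpath hedges).isSome := by
  simp [endPiece, hc]

theorem exists_isEndPieces (hAS : GuardedBy G H A S) (x : PathSig G) :
    ∃ o : Option (PathSig H) × Option (PathSig H), IsEndPieces S x o ∧
      ((∃ w ∈ S, w ∈ (x.2.2 : G.Walk x.1 x.2.1).support) →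
        (x.1 ∈ A → o.1.isSome) ∧ (x.2.1 ∈ A → o.2.isSome)) := by
  obtain ⟨u, v, p, hp⟩ := x
  by_cases hS : ∃ w ∈ S, w ∈ p.support
  swap
  · exact ⟨(none, none), ⟨by simp, by simp, by simp⟩, fun h => absurd h hS⟩
  obtain ⟨w₁, hw₁, w₂, hw₂, a, mid, b, rfl, ha, hb⟩ :=
    exists_guarded_end_segments hAS p hS
  have ha_path : a.IsPath := hp.of_append_left
  have hb_path : b.IsPath := by
    simpa using hp.of_append_right.of_append_right.reverse
  have hnodup := hp.isTrail.edges_nodup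
  simp only [Walk.edges_append, Walk.edges_reverse, List.nodup_append] at hnodup
  refine ⟨(endPiece (u ∈ A) a ha_path ha, endPiece (v ∈ A) b hb_path hb), ⟨?_, ?_, ?_⟩,
    fun _ => ⟨isSome_endPiece (hpath := ha_path), isSome_endPiece (hpath := hb_path)⟩⟩
  · intro y hy
    obtain ⟨h1, h2, h3⟩ := mem_endPiece (hpath := ha_path) hy
    refine ⟨h1, h2 ▸ hw₁, fun e he => ?_⟩
    rw [h3] at he
    simp [PathSig.edges, Walk.edges_append, he]
  · intro y hy
    obtain ⟨h1, h2, h3⟩ := mem_endPiece (hpath := hb_path) hy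
    refine ⟨h1, h2 ▸ hw₂, fun e he => ?_⟩
    rw [h3] at he
    simp [PathSig.edges, Walk.edges_append, he]
  · intro y₁ hy₁ y₂ hy₂ e he₁ he₂
    obtain ⟨-, -, h₁⟩ := mem_endPiece (hpath := ha_path) hy₁
    obtain ⟨-, -, h₂⟩ := mem_endPiece (hpath := hb_path) hy₂
    rw [h₁] at he₁
    rw [h₂] at he₂
    exact hnodup.2.2 e he₁ e (by simp [he₂]) rfl

theorem exists_flowToSet_of_guardedBy [Fintype V] [DecidableEq V] (hAS : GuardedBy G H A S)
    {cap : Sym2 V → ℕ} {f : ∀ u v : V, G.Path u v → ℝ} (hf : ∀ u v p, 0 ≤ f u v p)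
    (hcap : ∀ e, edgeLoad f e ≤ cap e)
    (hmeet : ∀ (u v : V) (p : G.Path u v), f u v p ≠ 0 → (u ∈ A ∨ v ∈ A) →
      ∃ w ∈ S, w ∈ (p : G.Walk u v).support) :
    ∃ g : EFlowToSet H cap S, ∀ z ∈ A, margOf f z = g.fromAmt z := by
  choose π hπ hsome using exists_isEndPieces (H := H) hAS
  refine ⟨⟨splitFlow f π, splitFlow_nonneg hf, fun _ _ _ => mem_of_splitFlow_ne_zero hπ,
    fun e => (edgeLoad_splitFlow_le hf hπ e).trans (hcap e)⟩, fun z hz => ?_⟩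
  refine (sum_pairFlow_splitFlow hπ fun x hx => ?_).symm
  constructor
  · rintro rfl
    exact (hsome x (hmeet _ _ _ hx (.inl hz))).1 hz
  · rintro rfl
    exact (hsome x (hmeet _ _ _ hx (.inr hz))).2 hz

end EndSegments

section TreeDecomp

variable {V τ : Type} [Fintype V] [DecidableEq V] [Fintype τ] {G : SimpleGraph V}

/-- `z` lies in a bag below `t` and, with `b`, in a bag outside the subtree of `t`; the node
where these two bags meet is a strict ancestor of `t`, so by the interval property
`z ∈ β(t) ∩ β(parent t)`. -/
lemma TreeDecomp.mem_sigma_of_adj (D : TreeDecomp τ G) (t : τ) {z b : V} (hz : z ∈ D.gamma t)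
    (hzb : G.Adj z b) (hb : b ∉ D.gamma t) : z ∈ D.sigma t := by
  simp only [TreeDecomp.gamma, gammaOf, Finset.mem_filter, Finset.mem_univ, true_and]
    at hz hb
  push Not at hb
  obtain ⟨s', ⟨k, hk⟩, hzs'⟩ := hz
  obtain ⟨s, hzs, hbs⟩ := D.edge_in_bag z b hzb
  have hs : ∀ n, D.parent^[n] s ≠ t := fun n hn => hb s ⟨n, hn⟩ hbs
  obtain ⟨m, n, hmn, hzm⟩ := D.meet z s' s hzs' hzs
  have hkm : k < m := by
    by_contra! hmk
    apply hs ((k - m) + n)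
    rw [Function.iterate_add_apply, ← hmn, ← Function.iterate_add_apply,
      Nat.sub_add_cancel hmk, hk]
  have ht : t ≠ D.root := by
    rintro rfl
    obtain ⟨n', hn'⟩ := D.reach_root s
    exact hs n' hn'
  have h1 : z ∈ D.bag (D.parent^[k] s') := D.interval z s' k m hkm.le hzs' hzm
  have h2 : z ∈ D.bag (D.parent^[k + 1] s') := D.interval z s' (k + 1) m hkm hzs' hzm
  rw [hk] at h1
  rw [Function.iterate_succ_apply', hk] at h2
  simp only [TreeDecomp.sigma, sigmaOf, if_neg ht, Finset.mem_inter]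
  exact ⟨h1, h2⟩

lemma TreeDecomp.guardedBy_Gt (D : TreeDecomp τ G) (t : τ) :
    GuardedBy G (D.Gt t) (D.gamma t) (D.sigma t) := by
  intro x y hxy hx hxσ
  have hy : y ∈ D.gamma t := by
    by_contra hy
    exact hxσ (D.mem_sigma_of_adj t hx hxy hy)
  exact ⟨⟨hxy, hx, hy, fun h => hxσ h.1⟩, hy⟩

end TreeDecomp

end

theorem good_implies_safe_general
    {V : Type} [Fintype V] [DecidableEq V] {τ : Type} [Fintype τ]
    (G : SimpleGraph V) (cap : Sym2 V → ℕ) (M : Finset (V × V))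
    (F : EDPFlow G cap M) (D : TreeDecomp τ G) (r : ℕ) (hr : 1 ≤ r)
    (t : τ) (hgood : EGood D F t) :
    ESafe cap D r F t ∧
      ∃ gf : EFlowToSet (D.Gt t) cap (D.sigma t),
        ∀ z ∈ D.gamma t, F.marg z ≤ gf.fromAmt z := by
  obtain ⟨g, hg⟩ := exists_flowToSet_of_guardedBy (D.guardedBy_Gt t) F.nonneg F.feas hgood
  have h4r : (1 : ℝ) ≤ 4 * r := by
    have : (1 : ℝ) ≤ r := by exact_mod_cast hr
    linarith
  refine ⟨⟨g, fun z hz => ?_⟩, g, fun z hz => (hg z hz).le⟩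
  rw [← hg z hz]
  exact div_le_self (margOf_nonneg F.nonneg z) h4r

/-- **Remark (good nodes are safe).**
If `t` is good with respect to `(f, x)` then `t` is safe: there is a feasible flow in
`G(t)` routing `x(z)` (in particular, at least `x(z)/(4r)`) units of flow from every
`z ∈ γ(t)` to `σ(t)`. -/
theorem good_implies_safe
    {V : Type} [Fintype V] [DecidableEq V] {τ : Type} [Fintype τ]
    (G : SimpleGraph V) (cap : Sym2 V → ℕ) (M : Finset (V × V))
    (F : EDPFlow G cap M) (D : TreeDecomp τ G) (r : ℕ) (hr : 1 ≤ r)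
    (hwidth : ∀ t' : τ, (D.bag t').card ≤ r)
    (t : τ) (hgood : EGood D F t) :
    ESafe cap D r F t ∧
      ∃ gf : EFlowToSet (D.Gt t) cap (D.sigma t),
        ∀ z ∈ D.gamma t, F.marg z ≤ gf.fromAmt z :=
  good_implies_safe_general G cap M F D r hr t hgood

end Paper
end

section
/- Let (G, k, (V^i)_{i=1}^k) be a Multicolored Clique instance with |V^i| = n for every i and n, k ≥ 2, and let (H, M, ℓ) with ℓ = k(n−1) + C(k,2) be the MaxNDP instance produced by the reduction. If H contains a family of ℓ pairwise vertex-disjoint paths, each connecting the two vertices of a distinct terminal pair of M, then G contains a k-clique {v^1, …, v^k} with v^i ∈ V^i for every i. -/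
open SimpleGraph Finset
open scoped Classical

namespace Paper

/-- The vertex set of the graph `H` produced by the reduction (with `k = K + 2`,
`n = N + 2`): the path vertices `x^i_{v,j}`, the terminals `s^i_v`, `t^i_v`, and the
connector vertices `p_{i,j}`.  (Vertices `x^i_{v,i}`, `s^i_{u^i}`, `t^i_{u^i}` and
`p_{i,j}` for `i ≥ j` are unused, isolated dummies; the distinguished vertex `u^i`
is chosen to be `0`.) -/
inductive HV (K N : ℕ) where
  | x : Fin (K + 2) → Fin (N + 2) → Fin (K + 2) → HV K N
  | s : Fin (K + 2) → Fin (N + 2) → HV K N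
  | t : Fin (K + 2) → Fin (N + 2) → HV K N
  | p : Fin (K + 2) → Fin (K + 2) → HV K N
  deriving DecidableEq, Fintype

/-- The index of the first vertex of the path `X^i_v` (the first element of
`{0, …, k−1} \ {i}`). -/
def firstIdx (K : ℕ) (i : Fin (K + 2)) : Fin (K + 2) := if i = 0 then 1 else 0

/-- The index of the last vertex of the path `X^i_v`. -/
def lastIdx (K : ℕ) (i : Fin (K + 2)) : Fin (K + 2) :=
  if i = Fin.last (K + 1) then ⟨K, by omega⟩ else Fin.last (K + 1)

/-- The adjacencies of the reduction graph `H`:  `s^i_v` is adjacent to the first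
vertices of `X^i_v` and `X^i_{u^i}`;  `t^i_v` to their last vertices;  `p_{i,j}`
(for `i < j`) to all `x^i_{v,j}` and all `x^j_{u,i}`;  and consecutive vertices of
each path `X^i_v` (the indices `0, …, k−1` skipping `i`) are adjacent. -/
def hrel (K N : ℕ) : HV K N → HV K N → Prop
  | HV.s i v, HV.x i' w j => i' = i ∧ v ≠ 0 ∧ (w = v ∨ w = 0) ∧ j = firstIdx K i
  | HV.t i v, HV.x i' w j => i' = i ∧ v ≠ 0 ∧ (w = v ∨ w = 0) ∧ j = lastIdx K i
  | HV.p i j, HV.x i' _w j' => i < j ∧ ((i' = i ∧ j' = j) ∨ (i' = j ∧ j' = i))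
  | HV.x i v j, HV.x i' v' j' => i' = i ∧ v' = v ∧ i ≠ j ∧ i ≠ j' ∧
      ((j' : ℕ) = (j : ℕ) + 1 ∨ ((j' : ℕ) = (j : ℕ) + 2 ∧ (i : ℕ) = (j : ℕ) + 1))
  | _, _ => False

/-- The graph `H` produced by the reduction. -/
def hgraph (K N : ℕ) : SimpleGraph (HV K N) := SimpleGraph.fromRel (hrel K N)

open scoped Classical in
/-- The terminal pairs `M = M_st ∪ M_x` of the reduction:  `(s^i_v, t^i_v)` for every
`i` and `v ≠ u^i = 0`, and `(x^i_{v,j}, x^j_{u,i})` for every edge `vu` of `G` with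
`v ∈ V^i`, `u ∈ V^j`, `i < j`. -/
noncomputable def Mpairs (K N : ℕ) (G : SimpleGraph (Fin (K + 2) × Fin (N + 2))) :
    Finset (HV K N × HV K N) :=
  Finset.univ.filter fun m : HV K N × HV K N =>
    (∃ (i : Fin (K + 2)) (v : Fin (N + 2)), v ≠ 0 ∧ m.1 = HV.s i v ∧ m.2 = HV.t i v) ∨
    (∃ (i j : Fin (K + 2)) (v u : Fin (N + 2)), i < j ∧ G.Adj (i, v) (j, u) ∧
      m.1 = HV.x i v j ∧ m.2 = HV.x j u i)

/-- The required number of routed pairs, `ℓ = k(n−1) + k(k−1)/2`. -/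
def ellKN (K N : ℕ) : ℕ := (K + 2) * (N + 1) + (K + 2) * (K + 1) / 2

/-- `G` (on vertex set `V = V^1 ⊎ ⋯ ⊎ V^k`, `V^i = {i} × Fin n`) has a multicolored
clique: a `k`-clique with exactly one vertex in each `V^i`. -/
def HasMulticoloredClique (K N : ℕ) (G : SimpleGraph (Fin (K + 2) × Fin (N + 2))) : Prop :=
  ∃ f : Fin (K + 2) → Fin (N + 2), ∀ i j, i ≠ j → G.Adj (i, f i) (j, f j)

/-! Routing `ℓ = k(n−1) + C(k,2)` pairs forces equality in two counts: there are only `k(n−1)`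
pairs in `M_st`, and the path of a pair in `M_x` joins two colour classes, so it passes through
one of the `C(k,2)` connectors `p_{i,j}`. Hence every pair `(s^i_v, t^i_v)` is routed, and, all
connectors being taken, its path stays inside colour `i` and runs along a whole path `X^i_w`.
These `n − 1` paths leave exactly one path `X^i_{f(i)}` of colour `i` free, so every routed pair
of `M_x` is `(x^i_{f(i),j}, x^j_{f(j),i})`; there are `C(k,2)` of them, one for each `i < j`, and
they witness the edges of the clique `{(i, f(i))}`. -/

theorem _root_.SimpleGraph.Walk.exists_adj_of_mem_support {V : Type} {G : SimpleGraph V}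
    {u v w : V} (p : G.Walk u v) (hw : w ∈ p.support) (hwv : w ≠ v) : ∃ y, G.Adj w y := by
  obtain rfl | ⟨e, he, hwe⟩ := SimpleGraph.Walk.mem_support_iff_exists_mem_edges.mp hw
  · exact absurd rfl hwv
  obtain ⟨y, rfl⟩ := Sym2.mem_iff_exists.mp hwe
  exact ⟨y, p.adj_of_mem_edges he⟩

section Routing

variable {V : Type} {H : SimpleGraph V} {R : Finset (V × V)}

def Visits (route : ∀ m ∈ R, H.Path m.1 m.2) (m : V × V) (z : V) : Prop :=
  ∃ hm : m ∈ R, z ∈ (route m hm : H.Walk m.1 m.2).support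

def DisjointRoutes (route : ∀ m ∈ R, H.Path m.1 m.2) : Prop :=
  ∀ m m' z, Visits route m z → Visits route m' z → m = m'

theorem visits_fst {route : ∀ m ∈ R, H.Path m.1 m.2} {m : V × V} (hm : m ∈ R) :
    Visits route m m.1 :=
  ⟨hm, SimpleGraph.Walk.start_mem_support _⟩

theorem visits_snd {route : ∀ m ∈ R, H.Path m.1 m.2} {m : V × V} (hm : m ∈ R) :
    Visits route m m.2 :=
  ⟨hm, SimpleGraph.Walk.end_mem_support _⟩

theorem HasNDPRouting.exists_disjoint_routes [Fintype V] [DecidableEq V] {M : Finset (V × V)}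
    {q : ℝ} (h : HasNDPRouting H (fun _ => 1) M 1 q) :
    ∃ (R : Finset (V × V)) (route : ∀ m ∈ R, H.Path m.1 m.2),
      R ⊆ M ∧ q ≤ R.card ∧ DisjointRoutes route := by
  obtain ⟨R, route, hRM, hq, hcap⟩ := h
  refine ⟨R, route, hRM, hq, fun m m' z ⟨hm, hz⟩ ⟨hm', hz'⟩ => ?_⟩
  have hle : #{mm ∈ R.attach | z ∈ (route mm.1 mm.2).val.support} ≤ 1 := hcap z
  exact congrArg Subtype.val
    (card_le_one.mp hle ⟨m, hm⟩ (by simpa using hz) ⟨m', hm'⟩ (by simpa using hz'))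

end Routing

namespace HV

variable {K N : ℕ}

def color : HV K N → Fin (K + 2)
  | x i _ _ => i
  | s i _ => i
  | t i _ => i
  | p i _ => i

def IsConnector : HV K N → Prop
  | p _ _ => True
  | _ => False

def IsSource : HV K N → Prop
  | s _ _ => True
  | _ => False

end HV

section Reduction

variable {K N : ℕ}

theorem hgraph_adj_source {i : Fin (K + 2)} {v : Fin (N + 2)} {y : HV K N}
    (h : (hgraph K N).Adj (HV.s i v) y) : v ≠ 0 ∧ ∃ w, y = HV.x i w (firstIdx K i) := by
  cases y <;> simp_all [hgraph, hrel]

theorem hgraph_adj_connector {a b : Fin (K + 2)} {y : HV K N}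
    (h : (hgraph K N).Adj (HV.p a b) y) : a < b := by
  cases y <;> simp_all [hgraph, hrel]

theorem color_eq_of_hrel {u z : HV K N} (h : hrel K N u z) (hu : ¬ u.IsConnector) :
    u.color = z.color := by
  cases u <;> cases z <;> simp_all [hrel, HV.color, HV.IsConnector]

theorem color_eq_of_adj {u z : HV K N} (h : (hgraph K N).Adj u z) (hu : ¬ u.IsConnector)
    (hz : ¬ z.IsConnector) : u.color = z.color := by
  rw [hgraph, fromRel_adj] at h
  rcases h.2 with h | h
  · exact color_eq_of_hrel h hu
  · exact (color_eq_of_hrel h hz).symm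

/-- Off the connectors and sources, a step from `x^i_{w,j}` stays on `X^i_w` without jumping over
any of its indices, unless `x^i_{w,j}` is the last vertex of `X^i_w`. -/
theorem hgraph_adj_x {i j : Fin (K + 2)} {w : Fin (N + 2)} {y : HV K N}
    (h : (hgraph K N).Adj (HV.x i w j) y) (hyc : ¬ y.IsConnector) (hys : ¬ y.IsSource) :
    j = lastIdx K i ∨ ∃ j', y = HV.x i w j' ∧ ∀ a, a ≠ i → j < a → j' ≤ a := by
  rw [hgraph, fromRel_adj] at h
  cases y with
  | x i' w' j' =>
    obtain ⟨-, ⟨rfl, rfl, -, -, hstep⟩ | ⟨rfl, rfl, -, -, hstep⟩⟩ := h <;>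
      refine Or.inr ⟨j', rfl, fun a hai hja => ?_⟩ <;>
      · have := Fin.val_ne_of_ne hai
        rw [Fin.lt_def] at hja
        rw [Fin.le_def]
        omega
  | t i' v' =>
    obtain ⟨rfl, -, -, hlast⟩ := (or_iff_right id).mp h.2
    exact Or.inl hlast
  | s => exact absurd trivial hys
  | p => exact absurd trivial hyc

theorem firstIdx_ne (i : Fin (K + 2)) : firstIdx K i ≠ i := by
  unfold firstIdx
  split_ifs with hi
  · exact hi ▸ one_ne_zero
  · exact Ne.symm hi

theorem firstIdx_le {i j : Fin (K + 2)} (h : j ≠ i) : firstIdx K i ≤ j := by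
  unfold firstIdx
  split_ifs with hi
  · subst hi
    exact Fin.one_le_of_ne_zero h
  · exact Fin.zero_le j

theorem le_lastIdx {i j : Fin (K + 2)} (h : j ≠ i) : j ≤ lastIdx K i := by
  unfold lastIdx
  split_ifs with hi
  · subst hi
    have := Fin.val_ne_of_ne h
    rw [Fin.le_def]
    simp only [Fin.val_last] at this ⊢
    omega
  · exact Fin.le_last j

theorem color_eq_of_walk {u z : HV K N} (W : (hgraph K N).Walk u z)
    (hW : ∀ y ∈ W.support, ¬ y.IsConnector) : u.color = z.color := by
  induction W with
  | nil => rfl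
  | cons h q ih =>
    rw [color_eq_of_adj h (hW _ (by simp)) (hW _ (by simp))]
    exact ih fun y hy => hW y (by simp [hy])

theorem lt_of_connector_mem_support {u z : HV K N} {a b : Fin (K + 2)}
    (W : (hgraph K N).Walk u z) (hz : ¬ z.IsConnector) (h : HV.p a b ∈ W.support) : a < b := by
  obtain ⟨y, hy⟩ := W.exists_adj_of_mem_support h (by rintro rfl; exact hz trivial)
  exact hgraph_adj_connector hy

theorem x_mem_support_of_walk {i j a i' : Fin (K + 2)} {w v' : Fin (N + 2)}
    (q : (hgraph K N).Walk (HV.x i w j) (HV.t i' v'))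
    (hq : ∀ z ∈ q.support, ¬ z.IsConnector ∧ ¬ z.IsSource) (hai : a ≠ i) (hja : j ≤ a) :
    HV.x i w a ∈ q.support := by
  generalize hu : HV.x i w j = u at q
  generalize he : HV.t i' v' = e at q
  induction q generalizing j with
  | nil => exact absurd (hu.trans he.symm) (by simp)
  | cons h q ih =>
    subst hu
    rcases eq_or_ne a j with rfl | haj
    · simp
    obtain hlast | ⟨j', rfl, hj'⟩ := hgraph_adj_x h (hq _ (by simp)).1 (hq _ (by simp)).2
    · exact absurd (le_antisymm (hlast ▸ le_lastIdx hai) hja) haj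
    · exact List.mem_cons_of_mem _
        (ih (hj' a hai (lt_of_le_of_ne hja haj.symm)) rfl he fun z hz => hq z (by simp [hz]))

theorem exists_lane_of_walk {i i' : Fin (K + 2)} {v v' : Fin (N + 2)}
    (W : (hgraph K N).Walk (HV.s i v) (HV.t i' v'))
    (hW : ∀ z ∈ W.support.tail, ¬ z.IsConnector ∧ ¬ z.IsSource) :
    ∃ w, ∀ j ≠ i, HV.x i w j ∈ W.support := by
  cases W with
  | cons h q =>
    obtain ⟨-, w, rfl⟩ := hgraph_adj_source h
    exact ⟨w, fun j hj => List.mem_cons_of_mem _ (x_mem_support_of_walk q hW hj (firstIdx_le hj))⟩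

def stPairs (K N : ℕ) : Finset (HV K N × HV K N) :=
  (univ ×ˢ univ.erase 0).image fun iv => (HV.s iv.1 iv.2, HV.t iv.1 iv.2)

/-- The indices of the connectors `p_{a,b}` that are not isolated dummies. -/
def ltPairs (K : ℕ) : Finset (Fin (K + 2) × Fin (K + 2)) := {ab | ab.1 < ab.2}

theorem st_mem_stPairs {i : Fin (K + 2)} {v : Fin (N + 2)} (hv : v ≠ 0) :
    (HV.s i v, HV.t i v) ∈ stPairs K N :=
  mem_image.mpr ⟨(i, v), by simp [hv], rfl⟩

theorem card_stPairs : #(stPairs K N) = (K + 2) * (N + 1) := by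
  rw [stPairs, card_image_of_injective _ (fun a b h => by simpa [Prod.ext_iff] using h),
    card_product, card_erase_of_mem (mem_univ _)]
  simp

theorem card_ltPairs : #(ltPairs K) = (K + 2) * (K + 1) / 2 := by
  rw [ltPairs, Fintype.card_product_filter_lt, Fintype.card_fin, Nat.choose_two_right]
  rfl

theorem eq_x_pair_of_mem_Mpairs {G : SimpleGraph (Fin (K + 2) × Fin (N + 2))}
    {m : HV K N × HV K N} (hm : m ∈ Mpairs K N G) (hst : m ∉ stPairs K N) :
    ∃ i j v u, i < j ∧ m = (HV.x i v j, HV.x j u i) := by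
  simp only [Mpairs, mem_filter, mem_univ, true_and] at hm
  obtain ⟨i, v, hv, h1, h2⟩ | ⟨i, j, v, u, hij, -, h1, h2⟩ := hm
  · exact absurd (mem_image.mpr ⟨(i, v), by simp [hv], Prod.ext h1.symm h2.symm⟩) hst
  · exact ⟨i, j, v, u, hij, Prod.ext h1 h2⟩

theorem adj_of_x_pair_mem_Mpairs {G : SimpleGraph (Fin (K + 2) × Fin (N + 2))}
    {i j : Fin (K + 2)} {v u : Fin (N + 2)} (hm : (HV.x i v j, HV.x j u i) ∈ Mpairs K N G) :
    G.Adj (i, v) (j, u) := by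
  simp only [Mpairs, mem_filter, mem_univ, true_and] at hm
  obtain ⟨_, _, _, h1, -⟩ | ⟨_, _, _, _, -, hadj, h1, h2⟩ := hm
  · cases h1
  · simp only [HV.x.injEq] at h1 h2
    obtain ⟨rfl, rfl, rfl⟩ := h1
    obtain ⟨-, rfl, -⟩ := h2
    exact hadj

section DisjointRouting

variable {G : SimpleGraph (Fin (K + 2) × Fin (N + 2))} {R : Finset (HV K N × HV K N)}
  {route : ∀ m ∈ R, (hgraph K N).Path m.1 m.2}

def IsLane (route : ∀ m ∈ R, (hgraph K N).Path m.1 m.2) (i : Fin (K + 2)) (w : Fin (N + 2)) :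
    Prop :=
  ∃ v, ∀ j ≠ i, Visits route (HV.s i v, HV.t i v) (HV.x i w j)

noncomputable def connectorsUsed (route : ∀ m ∈ R, (hgraph K N).Path m.1 m.2) :
    Finset (Fin (K + 2) × Fin (K + 2)) :=
  {ab ∈ ltPairs K | ∃ m ∈ R \ stPairs K N, Visits route m (HV.p ab.1 ab.2)}

theorem exists_connector_visit (hRM : R ⊆ Mpairs K N G) {m : HV K N × HV K N}
    (hm : m ∈ R \ stPairs K N) : ∃ ab ∈ ltPairs K, Visits route m (HV.p ab.1 ab.2) := by
  obtain ⟨hmR, hmst⟩ := mem_sdiff.mp hm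
  obtain ⟨i, j, v, u, hij, rfl⟩ := eq_x_pair_of_mem_Mpairs (hRM hmR) hmst
  let W : (hgraph K N).Walk (HV.x i v j) (HV.x j u i) := route _ hmR
  have hW : ∃ y ∈ W.support, y.IsConnector := by
    by_contra! h
    exact hij.ne (color_eq_of_walk W h)
  obtain ⟨y, hy, hyc⟩ := hW
  cases y with
  | p a b =>
    exact ⟨(a, b), by simpa [ltPairs] using lt_of_connector_mem_support W id hy, hmR, hy⟩
  | _ => exact hyc.elim

theorem card_sdiff_stPairs_le (hRM : R ⊆ Mpairs K N G) (hdisj : DisjointRoutes route) :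
    #(R \ stPairs K N) ≤ #(connectorsUsed route) := by
  refine card_le_card_of_forall_subsingleton
    (fun m (ab : Fin (K + 2) × Fin (K + 2)) => Visits route m (HV.p ab.1 ab.2))
    (fun m hm => ?_) (fun ab _ m hm m' hm' => hdisj m m' _ hm.2 hm'.2)
  obtain ⟨ab, hab, hvis⟩ := exists_connector_visit hRM hm
  exact ⟨ab, mem_filter.mpr ⟨hab, m, hm, hvis⟩, hvis⟩

theorem tight_of_ellKN_le_card (hRM : R ⊆ Mpairs K N G)
    (hdisj : DisjointRoutes route)
    (hℓ : ellKN K N ≤ #R) :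
    stPairs K N ⊆ R ∧ connectorsUsed route = ltPairs K ∧ #(ltPairs K) ≤ #(R \ stPairs K N) := by
  have hst : #(R ∩ stPairs K N) ≤ #(stPairs K N) := card_le_card inter_subset_right
  have hx : #(R \ stPairs K N) ≤ #(connectorsUsed route) := card_sdiff_stPairs_le hRM hdisj
  have hused : #(connectorsUsed route) ≤ #(ltPairs K) := card_filter_le _ _
  have hsplit := card_inter_add_card_sdiff R (stPairs K N)
  rw [ellKN, ← card_stPairs, ← card_ltPairs] at hℓ
  exact ⟨inter_eq_right.mp (eq_of_subset_of_card_le inter_subset_right (by omega)),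
    eq_of_subset_of_card_le (filter_subset _ _) (by omega), by omega⟩

theorem exists_lane (hdisj : DisjointRoutes route)
    (hst : stPairs K N ⊆ R) (hused : connectorsUsed route = ltPairs K) (i : Fin (K + 2))
    {v : Fin (N + 2)} (hv : v ≠ 0) :
    ∃ w, ∀ j ≠ i, Visits route (HV.s i v, HV.t i v) (HV.x i w j) := by
  have hm := hst (st_mem_stPairs (i := i) hv)
  let W : (hgraph K N).Walk (HV.s i v) (HV.t i v) := route _ hm
  have hstart : HV.s i v ∉ W.support.tail := by
    have hnodup := (route _ hm).prop.support_nodup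
    rw [← SimpleGraph.Walk.cons_tail_support] at hnodup
    exact (List.nodup_cons.mp hnodup).1
  have hown : ∀ z ∈ W.support.tail, ∀ m, Visits route m z → m = (HV.s i v, HV.t i v) :=
    fun z hz m hvis => hdisj _ _ z hvis ⟨hm, List.mem_of_mem_tail hz⟩
  have htail : ∀ z ∈ W.support.tail, ¬ z.IsConnector ∧ ¬ z.IsSource := by
    intro z hz
    refine ⟨?_, ?_⟩
    · -- every connector lies on the path of a pair of `M_x`
      cases z with
      | p a b =>
        have hab : (a, b) ∈ ltPairs K := by
          simpa [ltPairs] using lt_of_connector_mem_support W id (List.mem_of_mem_tail hz)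
        rw [← hused] at hab
        obtain ⟨m, hmx, hvis⟩ := (mem_filter.mp hab).2
        rw [hown _ hz m hvis] at hmx
        exact fun _ => (mem_sdiff.mp hmx).2 (st_mem_stPairs hv)
      | _ => exact id
    · -- `s^{i'}_0` is isolated, and any other source starts its own routed path
      cases z with
      | s i' v' =>
        rcases eq_or_ne v' 0 with rfl | hv'
        · obtain ⟨y, hy⟩ := W.exists_adj_of_mem_support (List.mem_of_mem_tail hz) (by simp)
          exact fun _ => (hgraph_adj_source hy).1 rfl
        · obtain ⟨heq, -⟩ := Prod.mk.inj (hown _ hz _ (visits_fst (hst (st_mem_stPairs hv'))))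
          exact fun _ => hstart (by rwa [heq] at hz)
      | _ => exact id
  obtain ⟨w, hw⟩ := exists_lane_of_walk W htail
  exact ⟨w, fun j hj => ⟨hm, hw j hj⟩⟩

theorem exists_forall_not_isLane_eq (hdisj : DisjointRoutes route)
    (hst : stPairs K N ⊆ R) (hused : connectorsUsed route = ltPairs K) (i : Fin (K + 2)) :
    ∃ c, ∀ w, ¬ IsLane route i w → w = c := by
  have hlanes : #(univ.erase (0 : Fin (N + 2))) ≤ #{w | IsLane route i w} := by
    refine card_le_card_of_forall_subsingleton
      (fun v w => ∀ j ≠ i, Visits route (HV.s i v, HV.t i v) (HV.x i w j))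
      (fun v hv => ?_) (fun w _ v hv v' hv' => ?_)
    · obtain ⟨w, hw⟩ := exists_lane hdisj hst hused i (ne_of_mem_erase hv)
      exact ⟨w, mem_filter.mpr ⟨mem_univ _, v, hw⟩, hw⟩
    · have := hdisj _ _ _ (hv.2 _ (firstIdx_ne i)) (hv'.2 _ (firstIdx_ne i))
      simpa using this
  have hsplit : #{w | IsLane route i w} + #{w | ¬ IsLane route i w} = N + 2 := by
    rw [card_filter_add_card_filter_not, card_univ, Fintype.card_fin]
  have hfree : #{w | ¬ IsLane route i w} ≤ 1 := by
    rw [card_erase_of_mem (mem_univ _), card_univ, Fintype.card_fin] at hlanes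
    omega
  obtain ⟨c, hc⟩ := card_le_one_iff_subset_singleton.mp hfree
  exact ⟨c, fun w hw => mem_singleton.mp (hc (mem_filter.mpr ⟨mem_univ _, hw⟩))⟩

theorem not_isLane_of_visits (hdisj : DisjointRoutes route)
    {m : HV K N × HV K N} {i j : Fin (K + 2)} {v : Fin (N + 2)}
    (hvis : Visits route m (HV.x i v j)) (hji : j ≠ i) (hm : ¬ m.1.IsSource) :
    ¬ IsLane route i v := fun ⟨_, hv'⟩ => hm (by rw [hdisj _ _ _ hvis (hv' j hji)]; trivial)

def cliquePairs (f : Fin (K + 2) → Fin (N + 2)) : Finset (HV K N × HV K N) :=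
  (ltPairs K).image fun ab => (HV.x ab.1 (f ab.1) ab.2, HV.x ab.2 (f ab.2) ab.1)

theorem x_pair_mem_cliquePairs (f : Fin (K + 2) → Fin (N + 2)) {i j : Fin (K + 2)}
    (hij : i < j) : (HV.x i (f i) j, HV.x j (f j) i) ∈ cliquePairs f :=
  mem_image.mpr ⟨(i, j), by simpa [ltPairs] using hij, rfl⟩

theorem sdiff_stPairs_subset_cliquePairs (hRM : R ⊆ Mpairs K N G) (hdisj : DisjointRoutes route)
    {f : Fin (K + 2) → Fin (N + 2)} (hf : ∀ i w, ¬ IsLane route i w → w = f i) :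
    R \ stPairs K N ⊆ cliquePairs f := by
  intro m hm
  obtain ⟨hmR, hmst⟩ := mem_sdiff.mp hm
  obtain ⟨i, j, v, u, hij, rfl⟩ := eq_x_pair_of_mem_Mpairs (hRM hmR) hmst
  obtain rfl := hf i v (not_isLane_of_visits hdisj (visits_fst hmR) hij.ne' id)
  obtain rfl := hf j u (not_isLane_of_visits hdisj (visits_snd hmR) hij.ne id)
  exact x_pair_mem_cliquePairs _ hij

end DisjointRouting

end Reduction

/-- **From disjoint paths to a multicolored clique.**
If the MaxNDP instance `(H, M, ℓ)` produced by the reduction (with unit node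
capacities and `ℓ = k(n−1) + k(k−1)/2`, `k = K + 2`, `n = N + 2`) admits a family of
`ℓ` pairwise vertex-disjoint paths, each connecting the two vertices of a distinct
terminal pair of `M`, then `G` contains a multicolored `k`-clique. -/
theorem disjoint_paths_to_clique (K N : ℕ)
    (G : SimpleGraph (Fin (K + 2) × Fin (N + 2)))
    (hroute : HasNDPRouting (hgraph K N) (fun _ => 1) (Mpairs K N G) 1
      ((ellKN K N : ℕ) : ℝ)) :
    HasMulticoloredClique K N G := by
  obtain ⟨R, route, hRM, hℓ, hdisj⟩ := hroute.exists_disjoint_routes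
  obtain ⟨hst, hused, hcard⟩ := tight_of_ellKN_le_card hRM hdisj (by exact_mod_cast hℓ)
  choose f hf using exists_forall_not_isLane_eq hdisj hst hused
  have hclique : cliquePairs f ⊆ R :=
    (eq_of_subset_of_card_le (sdiff_stPairs_subset_cliquePairs hRM hdisj hf)
      (card_image_le.trans hcard)).symm.subset.trans sdiff_subset
  have hadj : ∀ i j, i < j → G.Adj (i, f i) (j, f j) := fun i j hij =>
    adj_of_x_pair_mem_Mpairs (hRM (hclique (x_pair_mem_cliquePairs f hij)))
  exact ⟨f, fun i j hne => hne.lt_or_gt.elim (hadj i j) fun h => (hadj j i h).symm⟩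

end Paper
end

section
/- Let G be an undirected graph with node capacities, let u ∈ V(G), and let X ⊆ V(G) be a set of vertices each of capacity 1. Suppose there is a feasible flow (respecting node capacities) that routes 1/2 unit of flow from every vertex of X to u. Then X is 1/4-node-flow-linked in G: there is a feasible multicommodity flow that simultaneously routes 1/(4|X|) units of flow from a to b for every ordered pair (a,b) ∈ X × X. -/
open SimpleGraph Finset
open scoped Classical

namespace Paper

/-! Route the demand of `(a, b)` along `p` followed by the reverse of `q` (short-cut to a path),
for flow paths `p` from `a` and `q` from `b` into `u`, with weight `g(p) g(q) / (4 |X| g_a g_b)`,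
where `g_a ≥ 1/2` is the total flow leaving `a`; each pair then receives exactly `1/(4|X|)`.
A vertex `w` on the joined path lies on `p` or on `q`, so if `L_a` is the flow from `a` through `w`,
the load of `w` is at most `∑_{a,b ∈ X} (L_a / g_a + L_b / g_b) / (4|X|) ≤ ∑_{a ∈ X} L_a`,
which the original flow already routes through `w`. -/

noncomputable section

section JoinPath

variable {V : Type} [DecidableEq V] {G : SimpleGraph V}

def joinPath {a b u : V} (p : G.Path a u) (q : G.Path b u) : G.Path a b :=
  ⟨((p : G.Walk a u).append (q : G.Walk b u).reverse).bypass, Walk.bypass_isPath _⟩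

lemma mem_support_joinPath {a b u w : V} {p : G.Path a u} {q : G.Path b u}
    (hw : w ∈ (joinPath p q : G.Walk a b).support) :
    w ∈ (p : G.Walk a u).support ∨ w ∈ (q : G.Walk b u).support := by
  have := Walk.support_bypass_subset_support _ hw
  rwa [Walk.mem_support_append_iff, Walk.support_reverse, List.mem_reverse] at this

end JoinPath

section PathWeightings

variable {V : Type} [Fintype V] [DecidableEq V] {G : SimpleGraph V}

def vertLoadAt {a b : V} (φ : G.Path a b → ℝ) (w : V) : ℝ :=
  ∑ p : G.Path a b, if w ∈ (p : G.Walk a b).support then φ p else 0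

lemma vertLoad_eq_sum_vertLoadAt (f : ∀ a b : V, G.Path a b → ℝ) (w : V) :
    vertLoad f w = ∑ a, ∑ b, vertLoadAt (f a b) w :=
  rfl

lemma vertLoadAt_nonneg {a b : V} {φ : G.Path a b → ℝ} (hφ : ∀ p, 0 ≤ φ p) (w : V) :
    0 ≤ vertLoadAt φ w :=
  Finset.sum_nonneg fun p _ => by split_ifs <;> simp [hφ p]

lemma sum_vertLoadAt_le_vertLoad {f : ∀ a b : V, G.Path a b → ℝ} (hf : ∀ a b p, 0 ≤ f a b p)
    (s : Finset V) (v w : V) : ∑ a ∈ s, vertLoadAt (f a v) w ≤ vertLoad f w := by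
  rw [vertLoad_eq_sum_vertLoadAt]
  refine (Finset.sum_le_sum fun a _ => ?_).trans
    (Finset.sum_le_sum_of_subset_of_nonneg s.subset_univ fun a _ _ => ?_)
  · exact Finset.single_le_sum (f := fun b => vertLoadAt (f a b) w)
      (fun b _ => vertLoadAt_nonneg (hf a b) w) (Finset.mem_univ v)
  · exact Finset.sum_nonneg fun b _ => vertLoadAt_nonneg (hf a b) w

lemma pairFlow_nonneg {f : ∀ a b : V, G.Path a b → ℝ} (hf : ∀ a b p, 0 ≤ f a b p) (a b : V) :
    0 ≤ pairFlow f a b :=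
  Finset.sum_nonneg fun p _ => hf a b p

def joinFlow {a b u : V} (φ : G.Path a u → ℝ) (ψ : G.Path b u → ℝ) (r : G.Path a b) : ℝ :=
  ∑ pq : G.Path a u × G.Path b u, if joinPath pq.1 pq.2 = r then φ pq.1 * ψ pq.2 else 0

variable {a b u : V} {φ : G.Path a u → ℝ} {ψ : G.Path b u → ℝ}

lemma joinFlow_nonneg (hφ : ∀ p, 0 ≤ φ p) (hψ : ∀ q, 0 ≤ ψ q) (r : G.Path a b) :
    0 ≤ joinFlow φ ψ r :=
  Finset.sum_nonneg fun pq _ => by split_ifs <;> simp [mul_nonneg (hφ pq.1) (hψ pq.2)]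

lemma sum_mul_joinFlow (h : G.Path a b → ℝ) :
    ∑ r, h r * joinFlow φ ψ r = ∑ p, ∑ q, h (joinPath p q) * (φ p * ψ q) := by
  simp only [joinFlow, Finset.mul_sum, mul_ite, mul_zero]
  rw [Finset.sum_comm, ← Finset.univ_product_univ, Finset.sum_product]
  simp

lemma sum_joinFlow : ∑ r, joinFlow φ ψ r = (∑ p, φ p) * ∑ q, ψ q := by
  simpa [Finset.sum_mul_sum] using sum_mul_joinFlow (φ := φ) (ψ := ψ) fun _ => 1

lemma vertLoadAt_joinFlow_le (hφ : ∀ p, 0 ≤ φ p) (hψ : ∀ q, 0 ≤ ψ q) (w : V) :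
    vertLoadAt (joinFlow φ ψ) w ≤ vertLoadAt φ w * ∑ q, ψ q + (∑ p, φ p) * vertLoadAt ψ w := by
  have hload := sum_mul_joinFlow (φ := φ) (ψ := ψ)
    fun r => if w ∈ (r : G.Walk a b).support then 1 else 0
  simp only [boole_mul] at hload
  rw [vertLoadAt, hload, vertLoadAt, vertLoadAt, Finset.sum_mul_sum, Finset.sum_mul_sum,
    ← Finset.sum_add_distrib]
  refine Finset.sum_le_sum fun p _ => ?_
  rw [← Finset.sum_add_distrib]
  refine Finset.sum_le_sum fun q _ => ?_
  have hpq := mul_nonneg (hφ p) (hψ q)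
  have hjoin := mem_support_joinPath (w := w) (p := p) (q := q)
  split_ifs <;> first | linarith | tauto

lemma vertLoadAt_div {a b : V} (φ : G.Path a b → ℝ) (c : ℝ) (w : V) :
    vertLoadAt (fun r => φ r / c) w = vertLoadAt φ w / c := by
  simp only [vertLoadAt, Finset.sum_div, ite_div, zero_div]

end PathWeightings

lemma sum_sum_ite_mem_and_mem {α M : Type*} [Fintype α] [DecidableEq α] [AddCommMonoid M]
    (s : Finset α) (F : α → α → M) :
    ∑ a, ∑ b, (if a ∈ s ∧ b ∈ s then F a b else 0) = ∑ a ∈ s, ∑ b ∈ s, F a b := by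
  simp [ite_and, Finset.sum_ite_mem]

lemma sum_sum_add_div_two_mul_card {α : Type*} (s : Finset α) (f : α → ℝ) :
    ∑ a ∈ s, ∑ b ∈ s, (f a + f b) / (2 * s.card) = ∑ a ∈ s, f a := by
  rcases s.eq_empty_or_nonempty with rfl | hs
  · simp
  have hcard : (s.card : ℝ) ≠ 0 := by exact_mod_cast hs.card_pos.ne'
  simp only [← Finset.sum_div, Finset.sum_add_distrib, Finset.sum_const, nsmul_eq_mul,
    ← Finset.mul_sum]
  field_simp
  ring

section LinkedFlow

variable {V : Type} [Fintype V] [DecidableEq V] {G : SimpleGraph V} {cap : V → ℕ} {u : V}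

lemma NFlowToSet.fromAmt_eq_pairFlow (gf : NFlowToSet G cap {u}) (a : V) :
    gf.fromAmt a = pairFlow gf.g a u := by
  refine Finset.sum_eq_single u (fun v _ hv => Finset.sum_eq_zero fun p _ => ?_) (by simp)
  by_contra hne
  exact hv (Finset.mem_singleton.mp (gf.ends a v p hne))

def linkedFlow (gf : NFlowToSet G cap {u}) (X : Finset V) (a b : V) (r : G.Path a b) : ℝ :=
  if a ∈ X ∧ b ∈ X then
    joinFlow (gf.g a u) (gf.g b u) r / (4 * X.card * (pairFlow gf.g a u * pairFlow gf.g b u))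
  else 0

variable (gf : NFlowToSet G cap {u})

lemma linkedFlow_nonneg (X : Finset V) (a b : V) (r : G.Path a b) : 0 ≤ linkedFlow gf X a b r := by
  unfold linkedFlow
  split_ifs
  · exact div_nonneg (joinFlow_nonneg (gf.nonneg a u) (gf.nonneg b u) r)
      (mul_nonneg (by positivity)
        (mul_nonneg (pairFlow_nonneg gf.nonneg a u) (pairFlow_nonneg gf.nonneg b u)))
  · exact le_rfl

variable {X : Finset V}

lemma pairFlow_linkedFlow (hX : ∀ a ∈ X, 0 < pairFlow gf.g a u) (a b : V) :
    pairFlow (linkedFlow gf X) a b = if a ∈ X ∧ b ∈ X then 1 / (4 * (X.card : ℝ)) else 0 := by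
  rw [pairFlow]
  by_cases h : a ∈ X ∧ b ∈ X
  · simp only [linkedFlow, if_pos h]
    rw [← Finset.sum_div, sum_joinFlow]
    change pairFlow gf.g a u * pairFlow gf.g b u / _ = _
    have := hX a h.1
    have := hX b h.2
    field_simp
  · simp [linkedFlow, h]

lemma vertLoadAt_linkedFlow_le (hX : ∀ a ∈ X, 1 / 2 ≤ pairFlow gf.g a u) (a b w : V) :
    vertLoadAt (linkedFlow gf X a b) w ≤ if a ∈ X ∧ b ∈ X then
      (vertLoadAt (gf.g a u) w + vertLoadAt (gf.g b u) w) / (2 * X.card) else 0 := by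
  by_cases h : a ∈ X ∧ b ∈ X
  · unfold linkedFlow
    simp only [if_pos h, vertLoadAt_div]
    have hk : (0 : ℝ) < X.card := by exact_mod_cast Finset.card_pos.mpr ⟨a, h.1⟩
    have hA := hX a h.1
    have hB := hX b h.2
    have hLa := vertLoadAt_nonneg (gf.nonneg a u) w
    have hLb := vertLoadAt_nonneg (gf.nonneg b u) w
    set A := pairFlow gf.g a u
    set B := pairFlow gf.g b u
    set La := vertLoadAt (gf.g a u) w
    set Lb := vertLoadAt (gf.g b u) w
    have hLaA : La / A ≤ 2 * La := by rw [div_le_iff₀ (by linarith)]; nlinarith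
    have hLbB : Lb / B ≤ 2 * Lb := by rw [div_le_iff₀ (by linarith)]; nlinarith
    calc vertLoadAt (joinFlow (gf.g a u) (gf.g b u)) w / (4 * X.card * (A * B))
        ≤ (La * B + A * Lb) / (4 * X.card * (A * B)) := by
          gcongr
          exact vertLoadAt_joinFlow_le (gf.nonneg a u) (gf.nonneg b u) w
      _ = (La / A + Lb / B) / (4 * X.card) := by
          field_simp
      _ ≤ (2 * La + 2 * Lb) / (4 * X.card) := by gcongr
      _ = (La + Lb) / (2 * X.card) := by ring
  · simp [linkedFlow, h, vertLoadAt]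

lemma vertLoad_linkedFlow_le (hX : ∀ a ∈ X, 1 / 2 ≤ pairFlow gf.g a u) (w : V) :
    vertLoad (linkedFlow gf X) w ≤ cap w :=
  calc vertLoad (linkedFlow gf X) w
      ≤ ∑ a, ∑ b, if a ∈ X ∧ b ∈ X then
          (vertLoadAt (gf.g a u) w + vertLoadAt (gf.g b u) w) / (2 * X.card) else 0 :=
        Finset.sum_le_sum fun a _ => Finset.sum_le_sum fun b _ =>
          vertLoadAt_linkedFlow_le gf hX a b w
    _ = ∑ a ∈ X, vertLoadAt (gf.g a u) w := by
        rw [sum_sum_ite_mem_and_mem, sum_sum_add_div_two_mul_card]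
    _ ≤ vertLoad gf.g w := sum_vertLoadAt_le_vertLoad gf.nonneg X u w
    _ ≤ cap w := gf.feas w

end LinkedFlow

end

theorem flow_to_vertex_implies_node_flow_linked_general
    {V : Type} [Fintype V] [DecidableEq V] (G : SimpleGraph V) (cap : V → ℕ)
    (u : V) (X : Finset V)
    (gf : NFlowToSet G cap {u}) (hgf : ∀ x ∈ X, (1 : ℝ) / 2 ≤ gf.fromAmt x) :
    Nonempty (NMCFlow G cap fun a b =>
      if a ∈ X ∧ b ∈ X then 1 / (4 * (X.card : ℝ)) else 0) := by
  have hX : ∀ a ∈ X, (1 : ℝ) / 2 ≤ pairFlow gf.g a u := fun a ha =>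
    gf.fromAmt_eq_pairFlow a ▸ hgf a ha
  have hXpos : ∀ a ∈ X, 0 < pairFlow gf.g a u := fun a ha => by linarith [hX a ha]
  exact ⟨⟨linkedFlow gf X, linkedFlow_nonneg gf X,
    fun a b => (pairFlow_linkedFlow gf hXpos a b).ge, vertLoad_linkedFlow_le gf hX⟩⟩

/-- **Clustering step: a flow to a single vertex makes `X` node-flow-linked.**
Let `G` be node-capacitated, `u ∈ V(G)`, and `X` a set of vertices of capacity `1`.
If a feasible flow routes `1/2` unit of flow from every vertex of `X` to `u`, then `X`
is `1/4`-node-flow-linked in `G`: there is a feasible multicommodity flow routing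
`1/(4|X|)` units of flow between every ordered pair of vertices of `X`. -/
theorem flow_to_vertex_implies_node_flow_linked
    {V : Type} [Fintype V] [DecidableEq V] (G : SimpleGraph V) (cap : V → ℕ)
    (u : V) (X : Finset V) (hcap : ∀ x ∈ X, cap x = 1)
    (gf : NFlowToSet G cap {u}) (hgf : ∀ x ∈ X, (1 : ℝ) / 2 ≤ gf.fromAmt x) :
    Nonempty (NMCFlow G cap fun a b =>
      if a ∈ X ∧ b ∈ X then 1 / (4 * (X.card : ℝ)) else 0) :=
  flow_to_vertex_implies_node_flow_linked_general G cap u X gf hgf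

end Paper
end
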